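/- For every ε with 0 < ε < arctan(1/2), there exists z ∈ ℂ such that all three complex numbers F(z) = i·z − 1, G(z) = −(1+z)(1+3z)/((1+i·z)(1−2z)), and H(z) = (i·z − 1)/(3 + z) are nonzero and have argument π − ε; in fact z = tan(ε) works. Consequently, for every ε > 0 the curve {(F(z), G(z), H(z)) : z ∈ ℂ} meets the set T^ε × T^ε × T^ε ⊂ ℂ³ in a nonempty (real zero-dimensional) set. -/

import Mathlib

/-!
At `z = tan ε` all three values are positive real multiples of `F(z) = i tan ε - 1`, whose
argument is `π - ε` because `cos ε · F(z) = cos (π - ε) + i sin (π - ε)`. For `H` this is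
clear since `3 + tan ε > 0`; for `G` one uses `-1 / (1 + i t) = (i t - 1) / (1 + t²)`, so that
`G(t) = (1 + t)(1 + 3t) / ((1 - 2t)(1 + t²)) · F(t)`, a positive multiple for
`0 < t < 1/2`, i.e. for `0 < ε < arctan (1/2)`.
-/

section

open Complex

lemma I_mul_ofReal_sub_one_ne_zero (t : ℝ) : I * t - 1 ≠ 0 := by
  intro h
  simpa using congrArg re h

lemma arg_I_mul_tan_sub_one {ε : ℝ} (h0 : 0 ≤ ε) (hε : ε < Real.pi / 2) :
    arg (I * (Real.tan ε : ℂ) - 1) = Real.pi - ε := by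
  have hcos : 0 < Real.cos ε := Real.cos_pos_of_mem_Ioo ⟨by linarith [Real.pi_pos], hε⟩
  have hpolar : ((Real.cos ε : ℝ) : ℂ) * (I * (Real.tan ε : ℂ) - 1) =
      Complex.cos ↑(Real.pi - ε) + Complex.sin ↑(Real.pi - ε) * I := by
    rw [← ofReal_cos, ← ofReal_sin, Real.cos_pi_sub, Real.sin_pi_sub, Real.tan_eq_sin_div_cos]
    have hc : (Real.cos ε : ℂ) ≠ 0 := ofReal_ne_zero.mpr hcos.ne'
    rw [ofReal_div, ofReal_neg]
    field_simp
    ring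
  rw [← arg_real_mul _ hcos, hpolar,
    arg_cos_add_sin_mul_I ⟨by linarith [Real.pi_pos], by linarith⟩]

lemma ne_zero_and_arg_ofReal_mul {r θ : ℝ} {w : ℂ} (hr : 0 < r) (hw : w ≠ 0)
    (hθ : arg w = θ) : (r : ℂ) * w ≠ 0 ∧ arg ((r : ℂ) * w) = θ :=
  ⟨mul_ne_zero (ofReal_ne_zero.mpr hr.ne') hw, by rw [arg_real_mul w hr, hθ]⟩

lemma neg_div_one_add_I_mul_eq (t : ℝ) {a b : ℂ} (hb : b ≠ 0) :
    -(a / ((1 + I * t) * b)) = ((1 + (t : ℂ) ^ 2)⁻¹ * (a / b)) * (I * t - 1) := by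
  have hI : (1 + I * t : ℂ) ≠ 0 := by
    intro h
    simpa using congrArg re h
  have ht : (1 + (t : ℂ) ^ 2) ≠ 0 := by exact_mod_cast (by positivity : (0 : ℝ) < 1 + t ^ 2).ne'
  field_simp
  linear_combination (-a * t ^ 2) * I_sq

lemma tan_lt_of_lt_arctan {ε x : ℝ} (h0 : -(Real.pi / 2) < ε) (h : ε < Real.arctan x) :
    Real.tan ε < x := by
  rwa [← Real.arctan_tan h0 (h.trans (Real.arctan_lt_pi_div_two x)),
    Real.arctan_lt_arctan_iff] at h

end

/-- For every `0 < ε < arctan(1/2)` there exists `z ∈ ℂ`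
(indeed `z = tan ε`) such that `F(z) = i·z − 1`,
`G(z) = −(1+z)(1+3z)/((1+i·z)(1−2z))` and `H(z) = (i·z−1)/(3+z)` are all
nonzero with argument `π − ε`; hence the curve `(F, G, H)` meets
`T^ε × T^ε × T^ε` in a nonempty set. -/
theorem counterexample_meets_perturbed_cuts (ε : ℝ) (h1 : 0 < ε)
    (h2 : ε < Real.arctan (1/2)) :
    ∃ z : ℂ, z = (Real.tan ε : ℂ) ∧
      (Complex.I * z - 1 ≠ 0 ∧ Complex.arg (Complex.I * z - 1) = Real.pi - ε) ∧
      (-(((1 + z) * (1 + 3 * z)) / ((1 + Complex.I * z) * (1 - 2 * z))) ≠ 0 ∧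
        Complex.arg (-(((1 + z) * (1 + 3 * z)) / ((1 + Complex.I * z) * (1 - 2 * z))))
          = Real.pi - ε) ∧
      ((Complex.I * z - 1) / (3 + z) ≠ 0 ∧
        Complex.arg ((Complex.I * z - 1) / (3 + z)) = Real.pi - ε) := by
  have hε : ε < Real.pi / 2 := h2.trans (Real.arctan_lt_pi_div_two _)
  set t := Real.tan ε
  have ht0 : 0 < t := Real.tan_pos_of_pos_of_lt_pi_div_two h1 hε
  have ht2 : t < 1 / 2 := tan_lt_of_lt_arctan (by linarith [Real.pi_pos]) h2
  have hF := I_mul_ofReal_sub_one_ne_zero t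
  have hargF := arg_I_mul_tan_sub_one h1.le hε
  refine ⟨t, rfl, ⟨hF, hargF⟩, ?_, ?_⟩
  · have h12 : (1 - 2 * t : ℂ) ≠ 0 := by exact_mod_cast (by linarith : (0 : ℝ) < 1 - 2 * t).ne'
    have hr : 0 < (1 + t ^ 2)⁻¹ * ((1 + t) * (1 + 3 * t) / (1 - 2 * t)) := by
      have : 0 < 1 - 2 * t := by linarith
      positivity
    rw [neg_div_one_add_I_mul_eq t h12]
    exact_mod_cast ne_zero_and_arg_ofReal_mul hr hF hargF
  · rw [div_eq_inv_mul]
    exact_mod_cast ne_zero_and_arg_ofReal_mul (by positivity : 0 < (3 + t)⁻¹) hF hargF
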